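/- arXiv:math/0103048 — 2 statements merged into one kernel-verified Lean document; each statement's English description precedes it below -/
import Mathlib

section
/- Let R be a root system of type A_{n-1}, v ∈ P̌ a coweight, and w ∈ W₀. Let B₀ be the cone spanned by the negatives of the positive coroots, and define B(v,w) as the set of points v' = s_r ⋯ s₁(v) for affine reflections s_i = s_{α_i,k_i} such that at each step s_i s_{i-1}⋯s₁(v) − s_{i-1}⋯s₁(v) lies in w(B₀). Then B(v,w) = W_aff(v) ∩ (v + w(B₀)); equivalently, every point of the W_aff-orbit of v of the form v − Σ_{α ∈ Π} n_α w(α̌) with all n_α ∈ ℕ can be reached from v by a chain of affine reflections each of which subtracts a nonnegative multiple of some w(α̌) with α ∈ R⁺. -/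
/-- The coroot `e_i − e_j` of the type `A_{n-1}` root system, in `ℝⁿ`. -/
def Acoroot (n : ℕ) (i j : Fin n) : Fin n → ℝ :=
  fun m => (if m = i then 1 else 0) - (if m = j then 1 else 0)

/-- The coroot lattice `Q̌` of type `A_{n-1}`. -/
def Aclat (n : ℕ) : AddSubgroup (Fin n → ℝ) :=
  AddSubgroup.closure {x | ∃ i j : Fin n, i ≠ j ∧ x = Acoroot n i j}

/-- The coweight lattice `P̌` of type `A_{n-1}`. -/
def Awlat (n : ℕ) : Set (Fin n → ℝ) :=
  {v | ∀ i j : Fin n, i ≠ j → ∃ m : ℤ, v i - v j = (m : ℝ)}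

/-- The action of `W₀ = Sₙ` on `ℝⁿ` by permutation of coordinates. -/
def ApermAct (n : ℕ) (σ : Equiv.Perm (Fin n)) (x : Fin n → ℝ) : Fin n → ℝ :=
  fun m => x (σ⁻¹ m)

/-- The negative obtuse cone `B₀ = Σ_{α ∈ R⁺} ℝ_{≥0} (−α̌)`: nonnegative combinations of
the negatives of the positive coroots `e_i − e_j` (`i < j`). -/
def AnegObtuse (n : ℕ) : Set (Fin n → ℝ) :=
  {x | ∃ c : Fin n → Fin n → ℝ, (∀ i j, 0 ≤ c i j) ∧
    x = -∑ i, ∑ j, if i < j then c i j • Acoroot n i j else 0}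

lemma sum_apply_swap {n : ℕ} {α : Type*} (S : Finset (Fin n)) (T : Finset α)
    (f : α → (Fin n → ℝ)) : ∑ t ∈ S, (∑ i ∈ T, f i) t = ∑ i ∈ T, ∑ t ∈ S, f i t := by
  simp only [Finset.sum_apply]
  exact Finset.sum_comm

lemma sum_Acoroot (n : ℕ) (i j : Fin n) (S : Finset (Fin n)) :
    ∑ t ∈ S, Acoroot n i j t =
      (if i ∈ S then (1:ℝ) else 0) - (if j ∈ S then (1:ℝ) else 0) := by
  unfold Acoroot
  rw [Finset.sum_sub_distrib, Finset.sum_ite_eq' S i (fun _ => (1:ℝ)),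
    Finset.sum_ite_eq' S j (fun _ => (1:ℝ))]

lemma AnegObtuse_sum_expand (n : ℕ) (c : Fin n → Fin n → ℝ) (S : Finset (Fin n)) :
    ∑ t ∈ S, (-∑ i, ∑ j, if i < j then c i j • Acoroot n i j else 0) t
      = -∑ i, ∑ j, ∑ t ∈ S, (if i < j then c i j • Acoroot n i j else 0) t := by
  have h1 : ∀ t, (-∑ i, ∑ j, if i < j then c i j • Acoroot n i j else 0) t
      = -((∑ i, ∑ j, if i < j then c i j • Acoroot n i j else 0) t) := fun t => rfl
  simp only [h1, Finset.sum_neg_distrib]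
  rw [sum_apply_swap]
  congr 1
  refine Finset.sum_congr rfl fun i _ => ?_
  rw [sum_apply_swap]

lemma AnegObtuse_sum_le (n : ℕ) {b : Fin n → ℝ} (hb : b ∈ AnegObtuse n)
    (S : Finset (Fin n)) (hS : ∀ i j : Fin n, i ≤ j → j ∈ S → i ∈ S) :
    ∑ t ∈ S, b t ≤ 0 := by
  obtain ⟨c, hc, rfl⟩ := hb
  rw [AnegObtuse_sum_expand, neg_nonpos]
  refine Finset.sum_nonneg fun i _ => Finset.sum_nonneg fun j _ => ?_
  by_cases hij : i < j
  · simp only [hij, if_true, Pi.smul_apply, smul_eq_mul, ← Finset.mul_sum]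
    rw [sum_Acoroot]
    refine mul_nonneg (hc i j) ?_
    by_cases hjS : j ∈ S
    · have : i ∈ S := hS i j hij.le hjS
      simp [this, hjS]
    · by_cases hiS : i ∈ S <;> simp [hiS, hjS]
  · simp [hij]

lemma AnegObtuse_total (n : ℕ) {b : Fin n → ℝ} (hb : b ∈ AnegObtuse n) :
    ∑ t, b t = 0 := by
  obtain ⟨c, hc, rfl⟩ := hb
  rw [AnegObtuse_sum_expand, neg_eq_zero]
  refine Finset.sum_eq_zero fun i _ => Finset.sum_eq_zero fun j _ => ?_
  by_cases hij : i < j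
  · simp only [hij, if_true, Pi.smul_apply, smul_eq_mul, ← Finset.mul_sum]
    rw [sum_Acoroot]
    simp
  · simp [hij]

lemma AnegObtuse_zero (n : ℕ) : (0 : Fin n → ℝ) ∈ AnegObtuse n :=
  ⟨0, fun i j => le_refl 0, by simp⟩

lemma AnegObtuse_add (n : ℕ) {a b : Fin n → ℝ} (ha : a ∈ AnegObtuse n)
    (hb : b ∈ AnegObtuse n) : a + b ∈ AnegObtuse n := by
  obtain ⟨c, hc, rfl⟩ := ha
  obtain ⟨d, hd, rfl⟩ := hb
  refine ⟨c + d, fun i j => add_nonneg (hc i j) (hd i j), ?_⟩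
  rw [← neg_add, ← Finset.sum_add_distrib]
  congr 1
  refine Finset.sum_congr rfl fun i _ => ?_
  rw [← Finset.sum_add_distrib]
  refine Finset.sum_congr rfl fun j _ => ?_
  by_cases hij : i < j
  · simp [hij, add_smul]
  · simp [hij]

lemma AnegObtuse_single (n : ℕ) {i j : Fin n} (hij : i < j) {p : ℝ} (hp : 0 ≤ p) :
    -(p • Acoroot n i j) ∈ AnegObtuse n := by
  refine ⟨fun i' j' => if i' = i ∧ j' = j then p else 0,
    fun i' j' => by dsimp only; split <;> simp [hp], ?_⟩
  rw [neg_inj]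
  rw [Finset.sum_eq_single i ?h₀ (by simp)]
  · rw [Finset.sum_eq_single j ?h₁ (by simp)]
    · simp [hij]
    · intro j' _ hj'
      split <;> simp [hj']
  · intro i' _ hi'
    refine Finset.sum_eq_zero fun j' _ => ?_
    split <;> simp [hi']

lemma Aclat_int (n : ℕ) {q : Fin n → ℝ} (hq : q ∈ Aclat n) :
    ∀ m, ∃ z : ℤ, q m = (z : ℝ) := by
  refine AddSubgroup.closure_induction ?_ ?_ ?_ ?_ hq
  · rintro x ⟨i, j, hij, rfl⟩ m
    unfold Acoroot
    by_cases h1 : m = i <;> by_cases h2 : m = j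
    · exact absurd (h1.symm.trans h2) hij
    · exact ⟨1, by simp [h1, h2, (h1 ▸ hij : ¬ i = j)]⟩
    · exact ⟨-1, by simp [h1, h2, (h2 ▸ hij.symm : ¬ j = i)]⟩
    · exact ⟨0, by simp [h1, h2]⟩
  · exact fun m => ⟨0, by simp⟩
  · rintro x y _ _ hx hy m
    obtain ⟨a, ha⟩ := hx m; obtain ⟨c, hc⟩ := hy m
    exact ⟨a + c, by simp [ha, hc]⟩
  · rintro x _ hx m
    obtain ⟨a, ha⟩ := hx m
    exact ⟨-a, by simp [ha]⟩

lemma Aclat_sum (n : ℕ) {q : Fin n → ℝ} (hq : q ∈ Aclat n) : ∑ m, q m = 0 := by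
  refine AddSubgroup.closure_induction ?_ ?_ ?_ ?_ hq
  · rintro x ⟨i, j, hij, rfl⟩
    rw [show ∑ m, Acoroot n i j m = ∑ m ∈ Finset.univ, Acoroot n i j m from rfl,
      sum_Acoroot]
    simp
  · simp
  · intro x y _ _ hx hy
    simp only [Pi.add_apply, Finset.sum_add_distrib, hx, hy, add_zero]
  · intro x _ hx
    simp only [Pi.neg_apply, Finset.sum_neg_distrib, hx, neg_zero]

lemma Aclat_of (n : ℕ) {q : Fin n → ℝ} (z : Fin n → ℤ) (hz : ∀ m, q m = (z m : ℝ))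
    (hsum : ∑ m, q m = 0) : q ∈ Aclat n := by
  rcases Nat.eq_zero_or_pos n with hn | hn
  · have : q = 0 := by funext m; exact absurd m.2 (by omega)
    rw [this]; exact (Aclat n).zero_mem
  have hzsum : ∑ m, z m = 0 := by
    have : ((∑ m, z m : ℤ) : ℝ) = 0 := by
      push_cast
      rw [← hsum]
      exact Finset.sum_congr rfl fun m _ => (hz m).symm
    exact_mod_cast this
  set i₀ : Fin n := ⟨0, hn⟩
  have key : q = ∑ m, z m • Acoroot n m i₀ := by
    funext m'
    have hcast : ∑ m, ((z m : ℝ)) = 0 := by exact_mod_cast hzsum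
    have hA : ∀ a b m : Fin n, Acoroot n a b m
        = (if m = a then (1:ℝ) else 0) - (if m = b then 1 else 0) := fun _ _ _ => rfl
    simp only [Finset.sum_apply, Pi.smul_apply, Pi.mul_apply, hA, zsmul_eq_mul, mul_sub, mul_ite,
      mul_one, mul_zero, Finset.sum_sub_distrib, Finset.sum_ite_eq', Finset.mem_univ, if_true]
    by_cases h : m' = i₀
    · simp [h, hz i₀, hcast]
    · simp [h, hz m']
  rw [key]
  refine AddSubgroup.sum_mem _ fun m _ => ?_
  by_cases hm : m = i₀
  · have : Acoroot n m i₀ = 0 := by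
      funext m'; simp [Acoroot, hm]
    rw [this, smul_zero]
    exact (Aclat n).zero_mem
  · refine AddSubgroup.zsmul_mem _ (AddSubgroup.subset_closure ?_) _
    exact ⟨m, i₀, hm, rfl⟩

/-- The affine reflection `s_{α,k}` for the root `α = e_i − e_j` of type `A_{n-1}`:
`s_{α,k}(x) = x − (⟨α,x⟩ − k) α̌`. -/
def AaffRefl (n : ℕ) (i j : Fin n) (k : ℤ) (x : Fin n → ℝ) : Fin n → ℝ :=
  x - (x i - x j - (k : ℝ)) • Acoroot n i j

def ABrel (n : ℕ) (σ : Equiv.Perm (Fin n)) (u u' : Fin n → ℝ) : Prop :=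
  (∃ i j : Fin n, ∃ k : ℤ, i ≠ j ∧ u' = AaffRefl n i j k u) ∧
    ∃ b ∈ AnegObtuse n, u' - u = ApermAct n σ b

lemma Acoroot_perm (n : ℕ) (σ : Equiv.Perm (Fin n)) (i j : Fin n) (m : Fin n) :
    Acoroot n i j (σ⁻¹ m) = Acoroot n (σ i) (σ j) m := by
  have h1 : (σ⁻¹ m = i) ↔ (m = σ i) := by
    constructor
    · intro h; rw [← h, Equiv.Perm.inv_def, Equiv.apply_symm_apply]
    · intro h; rw [h, Equiv.Perm.inv_def, Equiv.symm_apply_apply]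
  have h2 : (σ⁻¹ m = j) ↔ (m = σ j) := by
    constructor
    · intro h; rw [← h, Equiv.Perm.inv_def, Equiv.apply_symm_apply]
    · intro h; rw [h, Equiv.Perm.inv_def, Equiv.symm_apply_apply]
  unfold Acoroot
  rw [if_congr h1 rfl rfl, if_congr h2 rfl rfl]

lemma step_rel (n : ℕ) (σ : Equiv.Perm (Fin n)) (u : Fin n → ℝ) (i j : Fin n)
    (hij : i < j) (p : ℤ) (hp : 0 ≤ p)
    (hk : ∃ k : ℤ, (k : ℝ) = u (σ i) - u (σ j) - (p : ℝ)) :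
    ABrel n σ u (u - (p : ℝ) • Acoroot n (σ i) (σ j)) := by
  obtain ⟨k, hkeq⟩ := hk
  constructor
  · refine ⟨σ i, σ j, k, fun h => absurd (σ.injective h) hij.ne, ?_⟩
    unfold AaffRefl
    rw [show u (σ i) - u (σ j) - (k : ℝ) = (p : ℝ) by linarith]
  · refine ⟨-((p : ℝ) • Acoroot n i j),
      AnegObtuse_single n hij (by exact_mod_cast hp), ?_⟩
    funext m
    show u m - (p : ℝ) • Acoroot n (σ i) (σ j) m - u m = -((p:ℝ) • Acoroot n i j) (σ⁻¹ m)
    have := Acoroot_perm n σ i j m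
    simp only [Pi.neg_apply, Pi.smul_apply, smul_eq_mul, this]
    ring

lemma reach (n : ℕ) (σ : Equiv.Perm (Fin n)) (v : Fin n → ℝ) (hv : v ∈ Awlat n)
    (b : Fin n → ℝ) (hb : b ∈ AnegObtuse n) (hbint : ∀ t, ∃ z : ℤ, b t = (z : ℝ)) :
    Relation.ReflTransGen (ABrel n σ) v (v + ApermAct n σ b) := by
  rcases Nat.eq_zero_or_pos n with rfl | hn
  · have : v + ApermAct 0 σ b = v := funext fun m => absurd m.2 (Nat.not_lt_zero _)
    rw [this]
  choose zb hzb using hbint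
  set q : ℕ → ℝ := fun s =>
    -∑ t ∈ Finset.univ.filter (fun t : Fin n => (t : ℕ) < s), b t with hqdef
  have hq0 : q 0 = 0 := by simp [hqdef]
  have hfilt : ∀ s : ℕ, ∀ hs : s < n,
      Finset.univ.filter (fun t : Fin n => (t : ℕ) < s + 1)
        = insert (⟨s, hs⟩ : Fin n)
            (Finset.univ.filter (fun t : Fin n => (t : ℕ) < s)) := by
    intro s hs
    ext t
    simp only [Finset.mem_filter, Finset.mem_univ, true_and, Finset.mem_insert]
    constructor
    · intro h
      by_cases ht : (t : ℕ) = s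
      · exact Or.inl (Fin.ext (by simpa using ht))
      · exact Or.inr (by omega)
    · rintro (rfl | h)
      · exact Nat.lt_succ_self s
      · omega
  have hqs : ∀ s : ℕ, (hs : s < n) → q (s + 1) = q s - b ⟨s, hs⟩ := by
    intro s hs
    simp only [hqdef]
    rw [hfilt s hs, Finset.sum_insert (by simp)]
    ring
  have hqnonneg : ∀ s, 0 ≤ q s := by
    intro s
    simp only [hqdef]
    rw [le_neg, neg_zero]
    refine AnegObtuse_sum_le n hb _ ?_
    intro i j hij hjmem
    simp only [Finset.mem_filter, Finset.mem_univ, true_and] at hjmem ⊢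
    have : (i : ℕ) ≤ (j : ℕ) := hij
    omega
  have hqint : ∀ s, ∃ z : ℤ, q s = (z : ℝ) := by
    intro s
    refine ⟨-∑ t ∈ Finset.univ.filter (fun t : Fin n => (t : ℕ) < s), zb t, ?_⟩
    simp only [hqdef]
    push_cast
    rw [neg_inj]
    exact Finset.sum_congr rfl fun t _ => hzb t
  set u : ℕ → (Fin n → ℝ) := fun s m =>
    v m + ((if ((σ⁻¹ m : Fin n) : ℕ) < s then b (σ⁻¹ m) else 0) +
      (if ((σ⁻¹ m : Fin n) : ℕ) = s then q s else 0)) with hudef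
  have hu0 : u 0 = v := by
    funext m
    simp only [hudef, hq0]
    simp
  have hulast : u (n - 1) = v + ApermAct n σ b := by
    funext m
    simp only [hudef]
    show _ = v m + b (σ⁻¹ m)
    have hlt : ((σ⁻¹ m : Fin n) : ℕ) < n := (σ⁻¹ m).2
    by_cases h : ((σ⁻¹ m : Fin n) : ℕ) < n - 1
    · rw [if_pos h, if_neg (by omega)]
      ring
    · have heq : ((σ⁻¹ m : Fin n) : ℕ) = n - 1 := by omega
      rw [if_neg (by omega), if_pos heq]
      have huniv : (Finset.univ : Finset (Fin n))
          = insert (⟨n-1, by omega⟩ : Fin n)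
              (Finset.univ.filter (fun t : Fin n => (t : ℕ) < n - 1)) := by
        ext t
        simp only [Finset.mem_insert, Finset.mem_filter, Finset.mem_univ, true_and, true_iff]
        by_cases ht : (t : ℕ) = n - 1
        · refine Or.inl (Fin.ext ?_)
          simpa using ht
        · refine Or.inr ?_
          have h2 := t.2
          omega
      have htot : ∑ t, b t = 0 := AnegObtuse_total n hb
      rw [huniv, Finset.sum_insert (by simp)] at htot
      have hbq : q (n - 1) = b ⟨n-1, by omega⟩ := by
        simp only [hqdef]; linarith
      have hmb : b (σ⁻¹ m) = b ⟨n-1, by omega⟩ :=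
        congrArg b (Fin.ext (by simpa using heq))
      rw [hbq, hmb]
      ring
  have hstep : ∀ s : ℕ, s + 1 < n → ABrel n σ (u s) (u (s + 1)) := by
    intro s hs
    have hs' : s < n := by omega
    have hij : (⟨s, hs'⟩ : Fin n) < ⟨s+1, hs⟩ := by
      simp [Fin.lt_iff_val_lt_val]
    obtain ⟨P, hP⟩ := hqint (s + 1)
    have hPpos : 0 ≤ P := by
      have := hqnonneg (s + 1); rw [hP] at this; exact_mod_cast this
    have hueq : u (s + 1) = u s - (P : ℝ) • Acoroot n (σ ⟨s, hs'⟩) (σ ⟨s+1, hs⟩) := by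
      funext m
      have hA : ∀ a : Fin n, (m = σ a) ↔ (σ⁻¹ m = a) := by
        intro a
        constructor
        · intro h; rw [h, Equiv.Perm.inv_def, Equiv.symm_apply_apply]
        · intro h; rw [← h, Equiv.Perm.inv_def, Equiv.apply_symm_apply]
      simp only [hudef, Pi.sub_apply, Pi.smul_apply]
      show v m + _ = (v m + _) - (P:ℝ) • ((if m = σ ⟨s, hs'⟩ then (1:ℝ) else 0) -
        (if m = σ ⟨s+1, hs⟩ then 1 else 0))
      rw [if_congr (hA _) rfl rfl, if_congr (hA _) rfl rfl]
      have hfin : ∀ (a : ℕ) (ha : a < n), (σ⁻¹ m = ⟨a, ha⟩) ↔ ((σ⁻¹ m : Fin n) : ℕ) = a := by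
        intro a ha
        constructor
        · intro h; rw [h]
        · intro h; exact Fin.ext (by simpa using h)
      rw [if_congr (hfin s hs') rfl rfl, if_congr (hfin (s+1) hs) rfl rfl]
      set tv := ((σ⁻¹ m : Fin n) : ℕ) with htv
      rcases lt_trichotomy tv s with h1 | h1 | h1
      · have A : tv < s + 1 := by omega
        have B : ¬ tv = s + 1 := by omega
        have C : ¬ tv = s := by omega
        simp only [if_pos A, if_pos h1, if_neg B, if_neg C, smul_eq_mul]
        ring
      · have A : tv < s + 1 := by omega
        have B : ¬ tv = s + 1 := by omega
        have C : ¬ tv < s := by omega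
        have hmb : b (σ⁻¹ m) = b ⟨s, hs'⟩ := congrArg b (Fin.ext h1)
        simp only [if_pos A, if_neg B, if_neg C, if_pos h1, smul_eq_mul]
        rw [← hP, hqs s hs', hmb]
        ring
      · rcases eq_or_lt_of_le (by omega : s + 1 ≤ tv) with h2 | h2
        · have A : ¬ tv < s + 1 := by omega
          have B : tv = s + 1 := h2.symm
          have C : ¬ tv < s := by omega
          have D : ¬ tv = s := by omega
          simp only [if_neg A, if_pos B, if_neg C, if_neg D, smul_eq_mul]
          rw [← hP]
          ring
        · have A : ¬ tv < s + 1 := by omega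
          have B : ¬ tv = s + 1 := by omega
          have C : ¬ tv < s := by omega
          have D : ¬ tv = s := by omega
          simp only [if_neg A, if_neg B, if_neg C, if_neg D, smul_eq_mul]
          ring
    rw [hueq]
    refine step_rel n σ (u s) _ _ hij P hPpos ?_
    have huA : u s (σ ⟨s, hs'⟩) = v (σ ⟨s, hs'⟩) + q s := by
      simp only [hudef]
      rw [Equiv.Perm.inv_def, Equiv.symm_apply_apply]
      rw [if_neg (by simp), if_pos (by simp)]
      ring
    have huB : u s (σ ⟨s+1, hs⟩) = v (σ ⟨s+1, hs⟩) := by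
      simp only [hudef]
      rw [Equiv.Perm.inv_def, Equiv.symm_apply_apply]
      rw [if_neg (by simp), if_neg (by simp)]
      ring
    have hne : σ (⟨s, hs'⟩ : Fin n) ≠ σ ⟨s+1, hs⟩ :=
      fun h => absurd (σ.injective h) hij.ne
    obtain ⟨z1, hz1⟩ := hv _ _ hne
    obtain ⟨z2, hz2⟩ := hqint s
    refine ⟨z1 + zb ⟨s, hs'⟩, ?_⟩
    rw [huA, huB, ← hP, hqs s hs', hzb ⟨s, hs'⟩]
    push_cast
    linarith
  have hreach : ∀ s : ℕ, s ≤ n - 1 → Relation.ReflTransGen (ABrel n σ) v (u s) := by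
    intro s
    induction s with
    | zero => intro _; rw [hu0]
    | succ s ih =>
      intro hs
      exact (ih (by omega)).tail (hstep s (by omega))
  have := hreach (n - 1) le_rfl
  rwa [hulast] at this
lemma ApermAct_add (n : ℕ) (σ : Equiv.Perm (Fin n)) (a b : Fin n → ℝ) :
    ApermAct n σ (a + b) = ApermAct n σ a + ApermAct n σ b := rfl

/-- The set `B(v,w)`: points reachable from `v` by a chain of affine reflections each of
whose steps lies in the cone `w(B₀)`. -/
def ABset (n : ℕ) (σ : Equiv.Perm (Fin n)) (v : Fin n → ℝ) : Set (Fin n → ℝ) :=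
  {v' | Relation.ReflTransGen
    (fun u u' => (∃ i j : Fin n, ∃ k : ℤ, i ≠ j ∧ u' = AaffRefl n i j k u) ∧
      ∃ b ∈ AnegObtuse n, u' - u = ApermAct n σ b) v v'}

/-- In type `A_{n-1}`, for any coweight `v ∈ P̌` and `w ∈ W₀`,
`B(v,w) = W_aff(v) ∩ (v + w(B₀))`. -/
theorem typeA_Bset_eq (n : ℕ) (v : Fin n → ℝ) (hv : v ∈ Awlat n)
    (σ : Equiv.Perm (Fin n)) :
    ABset n σ v =
      {x | ∃ τ : Equiv.Perm (Fin n), ∃ q ∈ Aclat n, x = (fun m => v (τ⁻¹ m)) + q} ∩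
        {x | ∃ b ∈ AnegObtuse n, x = v + ApermAct n σ b} := by
  ext x
  constructor
  · intro hx
    have hx' : Relation.ReflTransGen (ABrel n σ) v x := hx
    clear hx
    induction hx' with
    | refl =>
      constructor
      · exact ⟨1, 0, (Aclat n).zero_mem, by funext m; simp⟩
      · exact ⟨0, AnegObtuse_zero n, by funext m; simp [ApermAct]⟩
    | @tail u x' hvu hstep ih =>
      obtain ⟨⟨τ, p, hp, hu⟩, ⟨bb, hbb, hub⟩⟩ := ih
      constructor
      · -- orbit part
        obtain ⟨⟨i, j, k, hij, hrefl⟩, -⟩ := hstep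
        have huij : ∃ z : ℤ, u i - u j = (z : ℝ) := by
          obtain ⟨z2, hz2⟩ := Aclat_int n hp i
          obtain ⟨z3, hz3⟩ := Aclat_int n hp j
          have hne : τ⁻¹ i ≠ τ⁻¹ j := fun h => hij (τ⁻¹.injective h)
          obtain ⟨z1, hz1⟩ := hv _ _ hne
          refine ⟨z1 + z2 - z3, ?_⟩
          rw [hu]
          simp only [Pi.add_apply]
          push_cast
          linarith
        obtain ⟨z, hz⟩ := huij
        refine ⟨τ, p - (z - k) • Acoroot n i j, ?_, ?_⟩
        · refine AddSubgroup.sub_mem _ hp (AddSubgroup.zsmul_mem _ (AddSubgroup.subset_closure ?_) _)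
          exact ⟨i, j, hij, rfl⟩
        · rw [hrefl]
          unfold AaffRefl
          rw [hu]
          funext m
          simp only [Pi.sub_apply, Pi.add_apply, Pi.smul_apply, smul_eq_mul]
          have : u i - u j - (k : ℝ) = ((z - k : ℤ) : ℝ) := by
            rw [hz]; push_cast; ring
          rw [hu] at this
          simp only [Pi.add_apply] at this
          rw [this, zsmul_eq_mul]
          push_cast
          ring
      · -- cone part
        obtain ⟨-, ⟨bb', hbb', hub'⟩⟩ := hstep
        refine ⟨bb + bb', AnegObtuse_add n hbb hbb', ?_⟩
        rw [ApermAct_add]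
        funext m
        have h1 : u m = v m + ApermAct n σ bb m := by rw [hub]; rfl
        have h2 : x' m - u m = ApermAct n σ bb' m := by rw [← hub']; rfl
        simp only [Pi.add_apply]
        linarith [h1, h2]
  · rintro ⟨⟨τ, p, hp, hxo⟩, ⟨b, hb, hxc⟩⟩
    have hbint : ∀ t, ∃ z : ℤ, b t = (z : ℝ) := by
      intro t
      have h1 : b t = x (σ t) - v (σ t) := by
        rw [hxc]
        simp only [Pi.add_apply, ApermAct, Equiv.Perm.inv_def, Equiv.symm_apply_apply]
        ring
      have h2 : ∃ z : ℤ, x (σ t) - v (σ t) = (z : ℝ) := by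
        rw [hxo]
        simp only [Pi.add_apply]
        obtain ⟨z2, hz2⟩ := Aclat_int n hp (σ t)
        by_cases hfix : τ⁻¹ (σ t) = σ t
        · exact ⟨z2, by rw [hfix, hz2]; ring⟩
        · obtain ⟨z1, hz1⟩ := hv _ _ hfix
          exact ⟨z1 + z2, by push_cast; linarith⟩
      rw [h1]; exact h2
    have := reach n σ v hv b hb hbint
    rw [← hxc] at this
    exact this
end

section
/- For the symmetric group W₀ = S_n acting on ℤⁿ by permutations (type A_{n-1}), if w, w' ∈ W₀ satisfy that w'(λ) − w(λ) is a nonnegative integer combination of positive coroots eᵢ − eⱼ (i < j) for every dominant coweight λ ∈ ℤⁿ (λ₁ ≥ λ₂ ≥ ⋯ ≥ λₙ), then w' ≤ w in the Bruhat order on S_n. Conversely, if w' ≤ w then w'(λ) − w(λ) is such a combination for every dominant λ. -/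
/-- The number of inversions of a permutation of `Fin n`, i.e. its Coxeter length in the
symmetric group of type `A_{n-1}`. -/
def invCount (n : ℕ) (w : Equiv.Perm (Fin n)) : ℕ :=
  ((Finset.univ : Finset (Fin n × Fin n)).filter
    (fun p => p.1 < p.2 ∧ w p.2 < w p.1)).card

/-- The Bruhat order on the symmetric group `Sₙ`: generated by multiplication by a
transposition which increases the number of inversions. -/
def permBruhatLE (n : ℕ) (u v : Equiv.Perm (Fin n)) : Prop :=
  Relation.ReflTransGen
    (fun a b => (∃ i j : Fin n, i ≠ j ∧ b = a * Equiv.swap i j) ∧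
      invCount n a < invCount n b) u v

/-- The monoid of nonnegative integer combinations of the positive coroots `eᵢ − eⱼ`
(`i < j`) of type `A_{n-1}`, inside `ℤⁿ`. -/
def posCorootCombos (n : ℕ) : AddSubmonoid (Fin n → ℤ) :=
  AddSubmonoid.closure
    {x | ∃ i j : Fin n, i < j ∧
      x = fun m => (if m = i then 1 else 0) - (if m = j then 1 else 0)}

theorem Equiv.Perm.apply_inv_self {α : Type*} (f : Equiv.Perm α) (x : α) : f (f⁻¹ x) = x :=
  Equiv.apply_symm_apply f x

theorem Equiv.Perm.inv_apply_self {α : Type*} (f : Equiv.Perm α) (x : α) : f⁻¹ (f x) = x :=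
  Equiv.symm_apply_apply f x

lemma invCount_mul_swap_lt {n : ℕ} (σ : Equiv.Perm (Fin n)) {i j : Fin n}
    (hij : i < j) (hv : σ j < σ i) :
    invCount n (σ * Equiv.swap i j) < invCount n σ := by
  classical
  set s := Equiv.swap i j with hs
  set b := σ * s with hb
  have hbapp : ∀ x, b x = σ (s x) := fun x => rfl
  have hsi : s i = j := Equiv.swap_apply_left i j
  have hsj : s j = i := Equiv.swap_apply_right i j
  have hso : ∀ x, x ≠ i → x ≠ j → s x = x := fun x h1 h2 => Equiv.swap_apply_of_ne_of_ne h1 h2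
  have hinj : Function.Injective s := s.injective
  set A := ((Finset.univ : Finset (Fin n × Fin n)).filter
      (fun p => p.1 < p.2 ∧ σ p.2 < σ p.1)) with hA
  set B := ((Finset.univ : Finset (Fin n × Fin n)).filter
      (fun p => p.1 < p.2 ∧ b p.2 < b p.1)) with hB
  have hijA : (i, j) ∈ A := by simp [hA, hij, hv]
  -- branch-2 classification
  have class2 : ∀ p q : Fin n, p < q → σ (s q) < σ (s p) → ¬ s p < s q →
      ((p = i ∧ q ≠ j ∧ q < j) ∨ (q = j ∧ p ≠ i ∧ i < p)) := by
    intro p q hlt hinv hc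
    by_cases hpi : p = i
    · by_cases hqj : q = j
      · exfalso; rw [hpi, hqj, hsi, hsj] at hinv; exact absurd hv (not_lt_of_gt hinv)
      · have hqi : q ≠ i := by rw [← hpi]; exact (ne_of_gt hlt)
        rw [hpi, hsi, hso q hqi hqj] at hc
        exact Or.inl ⟨hpi, hqj, lt_of_le_of_ne (not_lt.mp hc) hqj⟩
    · by_cases hqj : q = j
      · have hpj : p ≠ j := by rw [← hqj]; exact ne_of_lt hlt
        rw [hqj, hsj, hso p hpi hpj] at hc
        exact Or.inr ⟨hqj, hpi, lt_of_le_of_ne (not_lt.mp hc) (Ne.symm hpi)⟩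
      · exfalso
        by_cases hqi : q = i
        · have hpj : p ≠ j := by
            intro h
            rw [h, hqi] at hlt
            exact absurd (lt_trans hij hlt) (lt_irrefl i)
          rw [hqi, hsi, hso p hpi hpj] at hc
          rw [hqi] at hlt
          exact hc (lt_trans hlt hij)
        · by_cases hpj : p = j
          · rw [hpj, hsj, hso q hqi hqj] at hc
            rw [hpj] at hlt
            exact hc (lt_trans hij hlt)
          · rw [hso p hpi hpj, hso q hqi hqj] at hc
            exact hc hlt
  have hcard : B.card ≤ (A.erase (i, j)).card := by
    apply Finset.card_le_card_of_injOn (fun p => if s p.1 < s p.2 then (s p.1, s p.2) else p)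
    · rintro ⟨p, q⟩ hpq
      simp only [hB, Finset.mem_coe, Finset.mem_filter, Finset.mem_univ, true_and] at hpq
      obtain ⟨hlt, hinv⟩ := hpq
      rw [hbapp, hbapp] at hinv
      by_cases hc : s p < s q
      · simp only [hc, if_pos]
        rw [Finset.mem_coe, Finset.mem_erase]
        refine ⟨?_, ?_⟩
        · intro hcontra
          have h1 : s p = i := congrArg Prod.fst hcontra
          have h2 : s q = j := congrArg Prod.snd hcontra
          have hp : p = j := by
            have := congrArg s h1; rwa [Equiv.swap_apply_self, hsi] at this
          have hq : q = i := by
            have := congrArg s h2; rwa [Equiv.swap_apply_self, hsj] at this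
          rw [hp, hq] at hlt
          exact absurd (lt_trans hlt hij) (lt_irrefl j)
        · simp only [hA, Finset.mem_filter, Finset.mem_univ, true_and]
          exact ⟨hc, hinv⟩
      · simp only [hc, if_neg, if_false]
        rcases class2 p q hlt hinv hc with ⟨hpi, hqj, hqlt⟩ | ⟨hqj, hpi, hplt⟩
        · rw [Finset.mem_coe, Finset.mem_erase]
          constructor
          · intro hcontra; exact hqj (congrArg Prod.snd hcontra)
          · simp only [hA, Finset.mem_filter, Finset.mem_univ, true_and]
            refine ⟨hlt, ?_⟩
            have hqi : q ≠ i := by rw [← hpi]; exact ne_of_gt hlt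
            rw [hpi, hsi, hso q hqi hqj] at hinv
            rw [hpi]
            exact lt_trans hinv hv
        · rw [Finset.mem_coe, Finset.mem_erase]
          constructor
          · intro hcontra; exact hpi (congrArg Prod.fst hcontra)
          · simp only [hA, Finset.mem_filter, Finset.mem_univ, true_and]
            refine ⟨hlt, ?_⟩
            have hpj : p ≠ j := by rw [← hqj]; exact ne_of_lt hlt
            rw [hqj, hsj, hso p hpi hpj] at hinv
            rw [hqj]
            exact lt_trans hv hinv
    · rintro ⟨p₁, q₁⟩ h1 ⟨p₂, q₂⟩ h2 heq
      simp only [hB, Finset.coe_filter, Set.mem_setOf_eq, Finset.mem_univ, true_and] at h1 h2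
      obtain ⟨hlt1, hinv1⟩ := h1
      obtain ⟨hlt2, hinv2⟩ := h2
      rw [hbapp, hbapp] at hinv1
      rw [hbapp, hbapp] at hinv2
      simp only at heq
      by_cases hc1 : s p₁ < s q₁ <;> by_cases hc2 : s p₂ < s q₂
      · rw [if_pos hc1, if_pos hc2] at heq
        have e1 : s p₁ = s p₂ := congrArg Prod.fst heq
        have e2 : s q₁ = s q₂ := congrArg Prod.snd heq
        exact Prod.ext (hinj e1) (hinj e2)
      · rw [if_pos hc1, if_neg hc2] at heq
        exfalso
        have e1 : s p₁ = p₂ := congrArg Prod.fst heq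
        have e2 : s q₁ = q₂ := congrArg Prod.snd heq
        rcases class2 p₂ q₂ hlt2 hinv2 hc2 with ⟨hpi, hqj, hqlt⟩ | ⟨hqj, hpi, hplt⟩
        · -- p₂ = i : then p₁ = j, q₁ = q₂ < j
          have hp1 : p₁ = j := by
            have := congrArg s e1; rwa [Equiv.swap_apply_self, hpi, hsi] at this
          have hq2i : q₂ ≠ i := by rw [← hpi]; exact ne_of_gt hlt2
          have hq1 : q₁ = q₂ := by
            have := congrArg s e2; rwa [Equiv.swap_apply_self, hso q₂ hq2i hqj] at this
          rw [hp1, hq1] at hlt1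
          exact absurd (lt_trans hlt1 hqlt) (lt_irrefl j)
        · -- q₂ = j : then q₁ = i, p₁ = p₂ > i
          have hq1 : q₁ = i := by
            have := congrArg s e2; rwa [Equiv.swap_apply_self, hqj, hsj] at this
          have hp2j : p₂ ≠ j := by rw [← hqj]; exact ne_of_lt hlt2
          have hp1 : p₁ = p₂ := by
            have := congrArg s e1; rwa [Equiv.swap_apply_self, hso p₂ hpi hp2j] at this
          rw [hp1, hq1] at hlt1
          exact absurd (lt_trans hplt hlt1) (lt_irrefl i)
      · rw [if_neg hc1, if_pos hc2] at heq
        exfalso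
        have e1 : p₁ = s p₂ := congrArg Prod.fst heq
        have e2 : q₁ = s q₂ := congrArg Prod.snd heq
        rcases class2 p₁ q₁ hlt1 hinv1 hc1 with ⟨hpi, hqj, hqlt⟩ | ⟨hqj, hpi, hplt⟩
        · have hp2 : p₂ = j := by
            have := congrArg s e1.symm; rwa [Equiv.swap_apply_self, hpi, hsi] at this
          have hq1i : q₁ ≠ i := by rw [← hpi]; exact ne_of_gt hlt1
          have hq2 : q₂ = q₁ := by
            have := congrArg s e2.symm; rwa [Equiv.swap_apply_self, hso q₁ hq1i hqj] at this
          rw [hp2, hq2] at hlt2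
          exact absurd (lt_trans hlt2 hqlt) (lt_irrefl j)
        · have hq2 : q₂ = i := by
            have := congrArg s e2.symm; rwa [Equiv.swap_apply_self, hqj, hsj] at this
          have hp1j : p₁ ≠ j := by rw [← hqj]; exact ne_of_lt hlt1
          have hp2 : p₂ = p₁ := by
            have := congrArg s e1.symm; rwa [Equiv.swap_apply_self, hso p₁ hpi hp1j] at this
          rw [hp2, hq2] at hlt2
          exact absurd (lt_trans hplt hlt2) (lt_irrefl i)
      · rw [if_neg hc1, if_neg hc2] at heq
        exact heq
  have hfin : (A.erase (i,j)).card < A.card := Finset.card_erase_lt_of_mem hijA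
  exact lt_of_le_of_lt hcard hfin

def dmat (n : ℕ) (u : Equiv.Perm (Fin n)) (k r : ℕ) : ℕ :=
  (Finset.univ.filter (fun p : Fin n => p.val < r ∧ (u p).val < k)).card

lemma bruhat_of_dmat (n : ℕ) (N : ℕ) : ∀ (v u : Equiv.Perm (Fin n)), invCount n v < N →
    (∀ k r, dmat n v k r ≤ dmat n u k r) → permBruhatLE n u v := by
  classical
  induction N with
  | zero => exact fun v u h _ => absurd h (Nat.not_lt_zero _)
  | succ N ih =>
    intro v u hN hdom
    by_cases huv : u = v
    · exact huv ▸ Relation.ReflTransGen.refl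
    -- first index where u and v differ
    have hDne : (Finset.univ.filter (fun p : Fin n => u p ≠ v p)).Nonempty := by
      by_contra h
      apply huv
      rw [Finset.not_nonempty_iff_eq_empty, Finset.filter_eq_empty_iff] at h
      exact Equiv.ext fun p => not_ne_iff.mp (h (Finset.mem_univ p))
    set i := (Finset.univ.filter (fun p : Fin n => u p ≠ v p)).min' hDne with hidef
    have hiD : u i ≠ v i := by
      have := Finset.min'_mem _ hDne
      rw [Finset.mem_filter] at this
      exact this.2
    have hmin : ∀ p : Fin n, p < i → u p = v p := by
      intro p hp
      by_contra h
      have : i ≤ p := Finset.min'_le _ p (by simp [h])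
      exact absurd (lt_of_lt_of_le hp this) (lt_irrefl p)
    -- head parts of dmat agree
    have headEq : ∀ k : ℕ,
        (Finset.univ.filter (fun p : Fin n => p.val < i.val ∧ (u p).val < k))
          = (Finset.univ.filter (fun p : Fin n => p.val < i.val ∧ (v p).val < k)) := by
      intro k
      apply Finset.filter_congr
      intro p _
      constructor
      · rintro ⟨h1, h2⟩; exact ⟨h1, by rwa [← hmin p h1]⟩
      · rintro ⟨h1, h2⟩; exact ⟨h1, by rwa [hmin p h1]⟩
    -- split dmat into head + tail
    have split : ∀ (x : Equiv.Perm (Fin n)) (k r : ℕ), i.val ≤ r →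
        dmat n x k r = (Finset.univ.filter (fun p : Fin n => p.val < i.val ∧ (x p).val < k)).card
          + (Finset.univ.filter (fun p : Fin n => i.val ≤ p.val ∧ p.val < r ∧ (x p).val < k)).card := by
      intro x k r hr
      rw [dmat, ← Finset.card_filter_add_card_filter_not
        (p := fun p : Fin n => p.val < i.val)]
      congr 1
      · rw [Finset.filter_filter]
        apply congrArg Finset.card
        apply Finset.filter_congr
        intro p _
        constructor
        · rintro ⟨⟨_, h2⟩, h3⟩; exact ⟨h3, h2⟩
        · rintro ⟨h1, h2⟩; exact ⟨⟨by omega, h2⟩, h1⟩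
      · rw [Finset.filter_filter]
        apply congrArg Finset.card
        apply Finset.filter_congr
        intro p _
        constructor
        · rintro ⟨⟨h1, h2⟩, h3⟩; exact ⟨by omega, h1, h2⟩
        · rintro ⟨h1, h2, h3⟩; exact ⟨⟨h2, h3⟩, by omega⟩
    have tail_mono : ∀ k r : ℕ, i.val ≤ r →
        (Finset.univ.filter (fun p : Fin n => i.val ≤ p.val ∧ p.val < r ∧ (v p).val < k)).card
          ≤ (Finset.univ.filter (fun p : Fin n => i.val ≤ p.val ∧ p.val < r ∧ (u p).val < k)).card := by
      intro k r hr
      have h1 := split v k r hr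
      have h2 := split u k r hr
      have h3 := hdom k r
      rw [h1, h2, headEq k] at h3
      omega
    -- u i < v i
    have hui : u i < v i := by
      have h := tail_mono ((v i).val + 1) (i.val + 1) (by omega)
      have hv1 : (Finset.univ.filter (fun p : Fin n =>
          i.val ≤ p.val ∧ p.val < i.val + 1 ∧ (v p).val < (v i).val + 1)) = {i} := by
        ext p
        simp only [Finset.mem_filter, Finset.mem_univ, true_and, Finset.mem_singleton]
        constructor
        · rintro ⟨h1, h2, _⟩; exact Fin.ext (by omega)
        · rintro rfl; exact ⟨le_refl _, by omega, by omega⟩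
      rw [hv1, Finset.card_singleton] at h
      have hune : (Finset.univ.filter (fun p : Fin n =>
          i.val ≤ p.val ∧ p.val < i.val + 1 ∧ (u p).val < (v i).val + 1)).Nonempty :=
        Finset.card_pos.mp (by omega)
      obtain ⟨p, hp⟩ := hune
      simp only [Finset.mem_filter, Finset.mem_univ, true_and] at hp
      have hpi : p = i := Fin.ext (by omega)
      rw [hpi] at hp
      have : (u i).val ≤ (v i).val := by omega
      rcases lt_or_eq_of_le this with h' | h'
      · exact h'
      · exact absurd (Fin.ext h') hiD
    -- the set S and its minimum j
    have hSne : (Finset.univ.filter (fun l : Fin n =>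
        i < l ∧ (u i).val ≤ (v l).val ∧ v l < v i)).Nonempty := by
      refine ⟨v⁻¹ (u i), ?_⟩
      have hvl : v (v⁻¹ (u i)) = u i := Equiv.Perm.apply_inv_self v (u i)
      simp only [Finset.mem_filter, Finset.mem_univ, true_and, hvl]
      refine ⟨?_, le_refl _, hui⟩
      rcases lt_trichotomy (v⁻¹ (u i)) i with h | h | h
      · exfalso
        have := hmin _ h
        rw [hvl] at this
        exact absurd (u.injective this.symm) (ne_of_gt h)
      · exfalso
        rw [h] at hvl
        exact hiD hvl.symm
      · exact h
    set j := (Finset.univ.filter (fun l : Fin n =>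
        i < l ∧ (u i).val ≤ (v l).val ∧ v l < v i)).min' hSne with hjdef
    have hjS : i < j ∧ (u i).val ≤ (v j).val ∧ v j < v i := by
      have := Finset.min'_mem _ hSne
      rw [Finset.mem_filter] at this
      exact this.2
    obtain ⟨hij, huivj, hvjvi⟩ := hjS
    have hjmin : ∀ p : Fin n, i < p → (u i).val ≤ (v p).val → v p < v i → j ≤ p := by
      intro p h1 h2 h3
      exact Finset.min'_le _ p (by
        simp only [Finset.mem_filter, Finset.mem_univ, true_and]
        exact ⟨h1, h2, h3⟩)
    set v₁ := v * Equiv.swap i j with hv1def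
    have hv1app : ∀ x, v₁ x = v (Equiv.swap i j x) := fun x => rfl
    have hv1i : v₁ i = v j := by rw [hv1app, Equiv.swap_apply_left]
    have hv1j : v₁ j = v i := by rw [hv1app, Equiv.swap_apply_right]
    have hv1o : ∀ x, x ≠ i → x ≠ j → v₁ x = v x := by
      intro x h1 h2; rw [hv1app, Equiv.swap_apply_of_ne_of_ne h1 h2]
    have hlen : invCount n v₁ < invCount n v := invCount_mul_swap_lt v hij hvjvi
    -- dominance for v₁
    have hdom₁ : ∀ k r, dmat n v₁ k r ≤ dmat n u k r := by
      intro k r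
      rcases le_or_gt r i.val with hri | hri
      · -- r ≤ i : sets for v₁ and v coincide
        have : dmat n v₁ k r = dmat n v k r := by
          unfold dmat
          congr 1
          apply Finset.filter_congr
          intro p _
          have hcong : p.val < r → v₁ p = v p := by
            intro hp
            exact hv1o p (fun h => by rw [h] at hp; omega)
              (fun h => by rw [h] at hp; have := hij; omega)
          constructor
          · rintro ⟨h1, h2⟩; exact ⟨h1, by rwa [← hcong h1]⟩
          · rintro ⟨h1, h2⟩; exact ⟨h1, by rwa [hcong h1]⟩
        rw [this]; exact hdom k r
      · rcases le_or_gt r j.val with hrj | hrj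
        · -- i < r ≤ j : the interesting range
          -- split off the p = i term
          have splitI : ∀ (x : Equiv.Perm (Fin n)),
              dmat n x k r = (if (x i).val < k then 1 else 0)
                + (Finset.univ.filter (fun p : Fin n =>
                    p ≠ i ∧ p.val < r ∧ (x p).val < k)).card := by
            intro x
            rw [dmat, ← Finset.card_filter_add_card_filter_not
              (p := fun p : Fin n => p = i)]
            congr 1
            · rw [Finset.filter_filter]
              by_cases hx : (x i).val < k
              · rw [if_pos hx]
                have : (Finset.univ.filter (fun p : Fin n =>
                    (p.val < r ∧ (x p).val < k) ∧ p = i)) = {i} := by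
                  ext p
                  simp only [Finset.mem_filter, Finset.mem_univ, true_and,
                    Finset.mem_singleton]
                  constructor
                  · rintro ⟨_, h⟩; exact h
                  · rintro rfl; exact ⟨⟨by omega, hx⟩, rfl⟩
                rw [this, Finset.card_singleton]
              · rw [if_neg hx]
                have : (Finset.univ.filter (fun p : Fin n =>
                    (p.val < r ∧ (x p).val < k) ∧ p = i)) = ∅ := by
                  ext p
                  simp only [Finset.mem_filter, Finset.mem_univ, true_and,
                    Finset.notMem_empty, iff_false]
                  rintro ⟨⟨_, h2⟩, rfl⟩
                  exact hx h2
                rw [this, Finset.card_empty]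
            · rw [Finset.filter_filter]
              congr 1
              apply Finset.filter_congr
              intro p _
              constructor
              · rintro ⟨⟨h1, h2⟩, h3⟩; exact ⟨h3, h1, h2⟩
              · rintro ⟨h1, h2, h3⟩; exact ⟨⟨h2, h3⟩, h1⟩
          have hTeq : (Finset.univ.filter (fun p : Fin n =>
                p ≠ i ∧ p.val < r ∧ (v₁ p).val < k))
              = (Finset.univ.filter (fun p : Fin n =>
                p ≠ i ∧ p.val < r ∧ (v p).val < k)) := by
            apply Finset.filter_congr
            intro p _
            have hcong : p ≠ i → p.val < r → v₁ p = v p := by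
              intro h1 h2
              exact hv1o p h1 (fun h => by rw [h] at h2; omega)
            constructor
            · rintro ⟨h1, h2, h3⟩; exact ⟨h1, h2, by rwa [← hcong h1 h2]⟩
            · rintro ⟨h1, h2, h3⟩; exact ⟨h1, h2, by rwa [hcong h1 h2]⟩
          rw [splitI v₁, hTeq, hv1i]
          by_cases hvjk : (v j).val < k
          · by_cases hvik : (v i).val < k
            · -- both small: equal to dmat v
              have : dmat n v k r = 1 + (Finset.univ.filter (fun p : Fin n =>
                  p ≠ i ∧ p.val < r ∧ (v p).val < k)).card := by
                rw [splitI v, if_pos hvik]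
              rw [if_pos hvjk, ← this]
              exact hdom k r
            · -- the strict case : v j < k ≤ v i
              rw [if_pos hvjk]
              have hdvk : dmat n v k r = (Finset.univ.filter (fun p : Fin n =>
                  p ≠ i ∧ p.val < r ∧ (v p).val < k)).card := by
                rw [splitI v, if_neg hvik]; omega
              -- show dmat u k r ≥ dmat v k r + 1 via the tail counting argument
              have hsplitu := split u k r (by omega)
              have hsplitv := split v k r (by omega)
              -- Tv ≤ Bv
              have hTvBv : (Finset.univ.filter (fun p : Fin n =>
                    i.val ≤ p.val ∧ p.val < r ∧ (v p).val < k)).card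
                  ≤ (Finset.univ.filter (fun p : Fin n =>
                    i.val ≤ p.val ∧ p.val < r ∧ (v p).val < (u i).val)).card := by
                apply Finset.card_le_card
                intro p hp
                simp only [Finset.mem_filter, Finset.mem_univ, true_and] at hp ⊢
                obtain ⟨h1, h2, h3⟩ := hp
                refine ⟨h1, h2, ?_⟩
                by_contra hcon
                push_neg at hcon
                have hpi : i < p := by
                  rcases lt_or_eq_of_le h1 with h | h
                  · exact h
                  · exfalso; have : p = i := Fin.ext h.symm
                    rw [this] at h3; omega
                have hpvi : v p < v i := by
                  have : (v p).val < (v i).val := by omega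
                  exact this
                have := hjmin p hpi hcon hpvi
                have : j.val ≤ p.val := this
                omega
              -- Bv ≤ Bu (tail_mono at k' = (u i).val)
              have hBvBu := tail_mono (u i).val r (by omega)
              -- Tu ≥ Bu + 1
              have hTuBu : (Finset.univ.filter (fun p : Fin n =>
                    i.val ≤ p.val ∧ p.val < r ∧ (u p).val < (u i).val)).card + 1
                  ≤ (Finset.univ.filter (fun p : Fin n =>
                    i.val ≤ p.val ∧ p.val < r ∧ (u p).val < k)).card := by
                have hnotmem : i ∉ (Finset.univ.filter (fun p : Fin n =>
                    i.val ≤ p.val ∧ p.val < r ∧ (u p).val < (u i).val)) := by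
                  simp only [Finset.mem_filter, Finset.mem_univ, true_and]
                  rintro ⟨_, _, h⟩; omega
                rw [← Finset.card_insert_of_notMem hnotmem]
                apply Finset.card_le_card
                intro p hp
                rw [Finset.mem_insert] at hp
                simp only [Finset.mem_filter, Finset.mem_univ, true_and]
                rcases hp with rfl | hp
                · exact ⟨le_refl _, by omega, by omega⟩
                · simp only [Finset.mem_filter, Finset.mem_univ, true_and] at hp
                  exact ⟨hp.1, hp.2.1, by omega⟩
              have hdomk := hdom k r
              rw [hsplitu, hsplitv, headEq k] at hdomk
              -- combine everything
              have final : dmat n v k r + 1 ≤ dmat n u k r := by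
                rw [hsplitu, hsplitv, headEq k]
                omega
              rw [hdvk] at final
              omega
          · -- v j ≥ k : v₁ count ≤ v count
            rw [if_neg hvjk]
            have : dmat n v k r ≥ (Finset.univ.filter (fun p : Fin n =>
                p ≠ i ∧ p.val < r ∧ (v p).val < k)).card := by
              rw [splitI v]; omega
            calc 0 + (Finset.univ.filter (fun p : Fin n =>
                p ≠ i ∧ p.val < r ∧ (v p).val < k)).card
                ≤ dmat n v k r := by omega
              _ ≤ dmat n u k r := hdom k r
        · -- j < r : card equal via the swap bijection
          have : dmat n v₁ k r = dmat n v k r := by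
            unfold dmat
            apply Finset.card_bij' (fun p _ => Equiv.swap i j p) (fun p _ => Equiv.swap i j p)
            · intro p hp
              simp only [Finset.mem_filter, Finset.mem_univ, true_and] at hp ⊢
              refine ⟨?_, ?_⟩
              · by_cases h1 : p = i
                · rw [h1, Equiv.swap_apply_left]; omega
                · by_cases h2 : p = j
                  · rw [h2, Equiv.swap_apply_right]
                    have : i < j := hij
                    omega
                  · rw [Equiv.swap_apply_of_ne_of_ne h1 h2]; exact hp.1
              · rw [← hv1app]; exact hp.2
            · intro p hp
              simp only [Finset.mem_filter, Finset.mem_univ, true_and] at hp ⊢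
              refine ⟨?_, ?_⟩
              · by_cases h1 : p = i
                · rw [h1, Equiv.swap_apply_left]
                  have : i < j := hij
                  omega
                · by_cases h2 : p = j
                  · rw [h2, Equiv.swap_apply_right]; omega
                  · rw [Equiv.swap_apply_of_ne_of_ne h1 h2]; exact hp.1
              · rw [hv1app, Equiv.swap_apply_self]; exact hp.2
            · intro p _; exact Equiv.swap_apply_self i j p
            · intro p _; exact Equiv.swap_apply_self i j p
          rw [this]; exact hdom k r
    have h1 : permBruhatLE n u v₁ := ih v₁ u (by omega) hdom₁
    refine Relation.ReflTransGen.tail h1 ?_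
    refine ⟨⟨i, j, ne_of_lt hij, ?_⟩, hlen⟩
    rw [hv1def, mul_assoc, Equiv.swap_mul_self, mul_one]

lemma combos_partial_nonneg {n : ℕ} {x : Fin n → ℤ} (hx : x ∈ posCorootCombos n) (k : ℕ) :
    0 ≤ ∑ m ∈ Finset.univ.filter (fun m : Fin n => m.val < k), x m := by
  induction hx using AddSubmonoid.closure_induction with
  | mem y hy =>
    obtain ⟨i, j, hij, rfl⟩ := hy
    rw [Finset.sum_sub_distrib, Finset.sum_ite_eq' _ i (fun _ => (1:ℤ)),
      Finset.sum_ite_eq' _ j (fun _ => (1:ℤ))]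
    have hij' : i.val < j.val := hij
    simp only [Finset.mem_filter, Finset.mem_univ, true_and]
    split_ifs <;> omega
  | zero => simp
  | add a b _ _ ha hb =>
    simp only [Pi.add_apply]
    rw [Finset.sum_add_distrib]
    exact add_nonneg ha hb

lemma sum_indicator_eq_dmat (n : ℕ) (u : Equiv.Perm (Fin n)) (k r : ℕ) :
    ∑ m ∈ Finset.univ.filter (fun m : Fin n => m.val < k),
      (if ((u⁻¹) m).val < r then (1:ℤ) else 0) = (dmat n u k r : ℤ) := by
  rw [Finset.sum_boole]
  congr 1
  rw [Finset.filter_filter]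
  apply Finset.card_bij' (fun m _ => (u⁻¹ : Equiv.Perm (Fin n)) m) (fun p _ => u p)
  · intro m hm
    simp only [Finset.mem_filter, Finset.mem_univ, true_and] at hm ⊢
    refine ⟨hm.2, ?_⟩
    rw [Equiv.Perm.apply_inv_self]
    exact hm.1
  · intro p hp
    simp only [Finset.mem_filter, Finset.mem_univ, true_and] at hp ⊢
    refine ⟨hp.2, ?_⟩
    rw [Equiv.Perm.inv_apply_self]
    exact hp.1
  · intro m _; exact Equiv.Perm.apply_inv_self u m
  · intro p _; exact Equiv.Perm.inv_apply_self u p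

lemma onestep_core {n : ℕ} (a : Equiv.Perm (Fin n)) (i j : Fin n) (hij : i < j)
    (hinv : invCount n a < invCount n (a * Equiv.swap i j))
    (lam : Fin n → ℤ) (hdom : ∀ i j : Fin n, i ≤ j → lam j ≤ lam i) :
    (fun m => lam (a⁻¹ m) - lam ((a * Equiv.swap i j)⁻¹ m)) ∈ posCorootCombos n := by
  have hne : i ≠ j := ne_of_lt hij
  have haij : a i < a j := by
    rcases lt_trichotomy (a i) (a j) with h | h | h
    · exact h
    · exact absurd (a.injective h) hne
    · exact absurd (invCount_mul_swap_lt a hij h) (by omega)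
  have hanei : a i ≠ a j := ne_of_lt haij
  set c : ℕ := (lam i - lam j).toNat with hcdef
  have hc : (c : ℤ) = lam i - lam j :=
    Int.toNat_of_nonneg (by have := hdom i j (le_of_lt hij); omega)
  set g : Fin n → ℤ := fun m => (if m = a i then 1 else 0) - (if m = a j then 1 else 0)
    with hgdef
  have hg : g ∈ posCorootCombos n :=
    AddSubmonoid.subset_closure ⟨a i, a j, haij, rfl⟩
  have hmem : c • g ∈ posCorootCombos n := AddSubmonoid.nsmul_mem _ hg c
  have heq : ∀ m : Fin n, ((a * Equiv.swap i j)⁻¹) m = Equiv.swap i j (a⁻¹ m) := by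
    intro m
    rw [mul_inv_rev, Equiv.swap_inv, Equiv.Perm.mul_apply]
  have hv : (fun m => lam (a⁻¹ m) - lam ((a * Equiv.swap i j)⁻¹ m)) = c • g := by
    funext m
    rw [heq m]
    simp only [Pi.smul_apply, nsmul_eq_mul, hgdef]
    by_cases h1 : a⁻¹ m = i
    · have hm : m = a i := by rw [← h1, Equiv.Perm.apply_inv_self]
      rw [h1, Equiv.swap_apply_left, if_pos hm, if_neg (hm ▸ hanei), hc]
      ring
    · by_cases h2 : a⁻¹ m = j
      · have hm : m = a j := by rw [← h2, Equiv.Perm.apply_inv_self]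
        have hm' : m ≠ a i := fun h => hanei (h.symm.trans hm)
        rw [h2, Equiv.swap_apply_right, if_neg hm', if_pos hm, hc]
        ring
      · have hm1 : m ≠ a i := fun h => h1 (by rw [h, Equiv.Perm.inv_apply_self])
        have hm2 : m ≠ a j := fun h => h2 (by rw [h, Equiv.Perm.inv_apply_self])
        rw [Equiv.swap_apply_of_ne_of_ne h1 h2, if_neg hm1, if_neg hm2]
        ring
  rw [hv]
  exact hmem

lemma onestep {n : ℕ} (a b : Equiv.Perm (Fin n))
    (hex : ∃ i j : Fin n, i ≠ j ∧ b = a * Equiv.swap i j)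
    (hinv : invCount n a < invCount n b)
    (lam : Fin n → ℤ) (hdom : ∀ i j : Fin n, i ≤ j → lam j ≤ lam i) :
    (fun m => lam (a⁻¹ m) - lam (b⁻¹ m)) ∈ posCorootCombos n := by
  obtain ⟨i, j, hne, rfl⟩ := hex
  rcases lt_or_gt_of_ne hne with h | h
  · exact onestep_core a i j h hinv lam hdom
  · rw [Equiv.swap_comm i j] at hinv ⊢
    exact onestep_core a j i h hinv lam hdom

/-- **Deodhar's characterization of the Bruhat order in type `A`.**
For `w, w' ∈ Sₙ` acting on `ℤⁿ` by permuting coordinates: `w'(λ) − w(λ)` is a nonnegative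
integer combination of positive coroots for every dominant `λ` iff `w' ≤ w` in the Bruhat
order. -/
theorem deodhar_typeA (n : ℕ) (w w' : Equiv.Perm (Fin n)) :
    (∀ lam : Fin n → ℤ, (∀ i j : Fin n, i ≤ j → lam j ≤ lam i) →
      (fun m => lam (w'⁻¹ m) - lam (w⁻¹ m)) ∈ posCorootCombos n) ↔
    permBruhatLE n w' w := by
  constructor
  · intro hyp
    apply bruhat_of_dmat n (invCount n w + 1) w w' (by omega)
    intro k r
    set lam : Fin n → ℤ := fun p => if p.val < r then 1 else 0 with hlam
    have hdomlam : ∀ i j : Fin n, i ≤ j → lam j ≤ lam i := by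
      intro i j hij
      have : i.val ≤ j.val := hij
      simp only [hlam]
      split_ifs <;> omega
    have hx := hyp lam hdomlam
    have hps := combos_partial_nonneg hx k
    rw [Finset.sum_sub_distrib] at hps
    have h1 := sum_indicator_eq_dmat n w' k r
    have h2 := sum_indicator_eq_dmat n w k r
    simp only [hlam] at hps
    rw [h1, h2] at hps
    omega
  · intro h lam hdomlam
    induction h with
    | refl =>
      have : (fun m => lam (w'⁻¹ m) - lam (w'⁻¹ m)) = 0 := funext fun m => sub_self _
      rw [this]
      exact zero_mem _
    | tail hrt hstep ih =>
      rename_i b c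
      have hbc := onestep b c hstep.1 hstep.2 lam hdomlam
      have : (fun m => lam (w'⁻¹ m) - lam (c⁻¹ m))
          = (fun m => lam (w'⁻¹ m) - lam (b⁻¹ m)) + (fun m => lam (b⁻¹ m) - lam (c⁻¹ m)) := by
        funext m; simp only [Pi.add_apply]; ring
      rw [this]
      exact add_mem ih hbc
end
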